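/- arXiv:2602.20931 — 6 statements merged into one kernel-verified Lean document; each statement's English description precedes it below -/
import Mathlib

section
/- Let E be a real inner product space, let q, p ∈ E, and let v ∈ E with v ≠ 0. Then the function t ↦ (‖p − (q + t·v)‖² − (t·‖v‖)²)/(2·‖v‖·t) tends to −⟨v, p − q⟩/‖v‖ as t → +∞; in particular this limit coincides with the Busemann limit lim_{t→+∞}(‖p − (q + t·v)‖ − t·‖v‖). -/
open Filter Topology RealInnerProductSpace

/-- In a real inner product space (the flat case), for `v ≠ 0`
the quotient `t ↦ (‖p − (q + t•v)‖² − (t‖v‖)²)/(2‖v‖t)` tends to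
`−⟪v, p − q⟫/‖v‖` as `t → +∞`; in particular this limit coincides with the
Busemann limit `lim_{t→+∞} (‖p − (q + t•v)‖ − t‖v‖)`. -/
theorem busemann_quotient_formula_flat {E : Type*} [NormedAddCommGroup E]
    [InnerProductSpace ℝ E] (q p v : E) (hv : v ≠ 0) :
    Tendsto (fun t : ℝ => (‖p - (q + t • v)‖ ^ 2 - (t * ‖v‖) ^ 2) / (2 * ‖v‖ * t)) atTop
        (𝓝 (-(⟪v, p - q⟫ / ‖v‖))) ∧
      Tendsto (fun t : ℝ => ‖p - (q + t • v)‖ - t * ‖v‖) atTop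
        (𝓝 (-(⟪v, p - q⟫ / ‖v‖))) := by
  set w := p - q with hw
  have hvn : (0:ℝ) < ‖v‖ := norm_pos_iff.mpr hv
  have hrewrite : ∀ t : ℝ, p - (q + t • v) = w - t • v := by
    intro t; rw [hw]; abel
  have key : ∀ t : ℝ, ‖p - (q + t • v)‖ ^ 2 = ‖w‖^2 - 2*t*⟪v, w⟫ + t^2*‖v‖^2 := by
    intro t
    rw [hrewrite t, @norm_sub_sq_real, real_inner_smul_right, norm_smul,
      real_inner_comm]
    simp only [Real.norm_eq_abs, mul_pow, sq_abs]
    ring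
  constructor
  · have heq : ∀ᶠ t : ℝ in atTop,
        ‖w‖^2/(2*‖v‖) * t⁻¹ - ⟪v, w⟫/‖v‖
          = (‖p - (q + t • v)‖ ^ 2 - (t * ‖v‖) ^ 2) / (2 * ‖v‖ * t) := by
      filter_upwards [eventually_gt_atTop 0] with t ht
      rw [key t]
      field_simp
      ring
    rw [show -(⟪v, w⟫/‖v‖) = ‖w‖^2/(2*‖v‖) * 0 - ⟪v, w⟫/‖v‖ by ring]
    exact Tendsto.congr' heq ((tendsto_inv_atTop_zero.const_mul _).sub_const _)
  · have hden : Tendsto (fun t : ℝ => ‖t⁻¹ • w - v‖ + ‖v‖) atTop (𝓝 (‖v‖ + ‖v‖)) := by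
      have h0 := (((tendsto_inv_atTop_zero : Tendsto (fun t:ℝ => t⁻¹) atTop (𝓝 (0:ℝ))).smul_const w).sub_const v).norm.add_const ‖v‖
      simpa using h0
    have hnum : Tendsto (fun t : ℝ => ‖w‖^2 * t⁻¹ - 2*⟪v, w⟫) atTop (𝓝 (0 - 2*⟪v, w⟫)) := by
      have h0 := (tendsto_inv_atTop_zero.const_mul (‖w‖^2)).sub_const (2*⟪v, w⟫)
      simpa using h0
    have hlim : Tendsto (fun t : ℝ => (‖w‖^2 * t⁻¹ - 2*⟪v, w⟫) / (‖t⁻¹ • w - v‖ + ‖v‖))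
        atTop (𝓝 ((0 - 2*⟪v, w⟫) / (‖v‖ + ‖v‖))) :=
      hnum.div hden (by positivity)
    have hval : (0 - 2*⟪v, w⟫) / (‖v‖ + ‖v‖) = -(⟪v, w⟫/‖v‖) := by
      field_simp; ring
    rw [← hval]
    refine Tendsto.congr' ?_ hlim
    filter_upwards [eventually_gt_atTop 0] with t ht
    have ht' : t ≠ 0 := ne_of_gt ht
    have ha : ‖t⁻¹ • w - v‖ = t⁻¹ * ‖w - t • v‖ := by
      have : t⁻¹ • w - v = t⁻¹ • (w - t • v) := by
        rw [smul_sub t⁻¹ w (t • v), smul_smul, inv_mul_cancel₀ ht', one_smul]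
      rw [this, norm_smul, Real.norm_eq_abs, abs_inv, abs_of_pos ht]
    set a := ‖w - t • v‖ with hadef
    have ha0 : 0 ≤ a := norm_nonneg _
    have hsum : 0 < a + t * ‖v‖ := by positivity
    have hsq : a^2 = ‖w‖^2 - 2*t*⟪v, w⟫ + t^2*‖v‖^2 := by
      rw [hadef, ← hrewrite t]; exact key t
    have hd : t⁻¹ * a + ‖v‖ ≠ 0 := by positivity
    rw [ha, hrewrite t, ← hadef, div_eq_iff hd]
    field_simp
    nlinarith [hsq]
end

section
/- Let p, q ∈ H^n_κ and let v be a nonzero tangent vector at q. Then the quantity −⟨p, κ·q + (√κ/‖v‖)·v⟩_L is strictly positive, and the Busemann limit on H^n_κ is given by: t ↦ d_κ(p, exp_q(tv)) − ‖v‖·t tends to (1/√κ)·ln(−⟨p, κ·q + (√κ/‖v‖)·v⟩_L) as t → +∞. -/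
/-!
Put `w = κq + (√κ/‖v‖)v`. A nonzero vector Lorentz-orthogonal to the timelike `q` is spacelike,
so `‖v‖ > 0`, and then `w` is null with `⟨q, w⟩ = -1`, hence future-pointing. The reversed
Cauchy–Schwarz inequality (Cauchy–Schwarz on the spatial coordinates, with `|x̄|² < x_{n+1}²`
for timelike and `≤` for null vectors) gives `⟨p, w⟩ < 0`. Along the geodesic
`e^{-√κ‖v‖t} exp_q(tv) → w/(2κ)`, so `X(t) = -κ⟨p, exp_q(tv)⟩ ~ e^{√κ‖v‖t}·(-⟨p, w⟩)/2`, and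
`arcosh X = log (2X) + o(1)` yields the limit.
-/

open Filter Topology

/-- The Lorentz bilinear form on `ℝ^{n+1}`:
`⟨x,y⟩_L = (∑_{i=1}^n x_i y_i) − x_{n+1} y_{n+1}`. -/
noncomputable def lform (n : ℕ) (x y : Fin (n + 1) → ℝ) : ℝ :=
  (∑ i : Fin n, x i.castSucc * y i.castSucc) - x (Fin.last n) * y (Fin.last n)

/-- The κ-hyperbolic space form
`H^n_κ = {p ∈ ℝ^{n+1} : ⟨p,p⟩_L = −1/κ, p_{n+1} > 0}`. -/
def Hyp (n : ℕ) (κ : ℝ) : Set (Fin (n + 1) → ℝ) :=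
  {p | lform n p p = -(1 / κ) ∧ 0 < p (Fin.last n)}

/-- Inverse hyperbolic cosine: `arcosh x = log (x + √(x² − 1))`. -/
noncomputable def arcosh (x : ℝ) : ℝ :=
  Real.log (x + Real.sqrt (x ^ 2 - 1))

/-- Intrinsic distance on `H^n_κ`: `d_κ(p,q) = (1/√κ)·arcosh(−κ⟨p,q⟩_L)`. -/
noncomputable def hdist (n : ℕ) (κ : ℝ) (p q : Fin (n + 1) → ℝ) : ℝ :=
  (1 / Real.sqrt κ) * arcosh (-(κ * lform n p q))

/-- Lorentzian norm of a spacelike vector: `‖v‖ = √⟨v,v⟩_L`. -/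
noncomputable def hnorm (n : ℕ) (v : Fin (n + 1) → ℝ) : ℝ :=
  Real.sqrt (lform n v v)

/-- The geodesic `exp_q(tv) = cosh(√κ t‖v‖)·q + (sinh(√κ t‖v‖)/(√κ‖v‖))·v`. -/
noncomputable def hexp (n : ℕ) (κ : ℝ) (q v : Fin (n + 1) → ℝ) (t : ℝ) :
    Fin (n + 1) → ℝ :=
  Real.cosh (Real.sqrt κ * t * hnorm n v) • q +
    (Real.sinh (Real.sqrt κ * t * hnorm n v) / (Real.sqrt κ * hnorm n v)) • v

noncomputable def spatialInner (n : ℕ) (x y : Fin (n + 1) → ℝ) : ℝ :=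
  ∑ i : Fin n, x i.castSucc * y i.castSucc

section Lorentz

variable {n : ℕ}

lemma lform_eq_spatialInner_sub (x y : Fin (n + 1) → ℝ) :
    lform n x y = spatialInner n x y - x (Fin.last n) * y (Fin.last n) := rfl

lemma lform_comm (x y : Fin (n + 1) → ℝ) : lform n x y = lform n y x := by
  simp only [lform, mul_comm]

lemma lform_smul_add_smul (x y z : Fin (n + 1) → ℝ) (a b : ℝ) :
    lform n x (a • y + b • z) = a * lform n x y + b * lform n x z := by
  simp only [lform, Pi.add_apply, Pi.smul_apply, smul_eq_mul, mul_add, mul_sub,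
    Finset.sum_add_distrib, Finset.mul_sum, mul_left_comm (x _)]
  ring

lemma spatialInner_self_nonneg (x : Fin (n + 1) → ℝ) : 0 ≤ spatialInner n x x :=
  Finset.sum_nonneg fun i _ => mul_self_nonneg (x i.castSucc)

lemma sq_spatialInner_le (x y : Fin (n + 1) → ℝ) :
    spatialInner n x y ^ 2 ≤ spatialInner n x x * spatialInner n y y := by
  simpa only [spatialInner, sq] using
    Finset.sum_mul_sq_le_sq_mul_sq Finset.univ (fun i => x (Fin.castSucc i))
      (fun i => y (Fin.castSucc i))

lemma sq_spatialInner_le_of_lform_self_nonpos (x : Fin (n + 1) → ℝ) {y : Fin (n + 1) → ℝ}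
    (hy : lform n y y ≤ 0) :
    spatialInner n x y ^ 2 ≤ spatialInner n x x * y (Fin.last n) ^ 2 := by
  rw [lform_eq_spatialInner_sub] at hy
  calc spatialInner n x y ^ 2 ≤ spatialInner n x x * spatialInner n y y := sq_spatialInner_le x y
    _ ≤ spatialInner n x x * y (Fin.last n) ^ 2 := by
      gcongr
      · exact spatialInner_self_nonneg x
      · linarith

lemma spatialInner_self_lt_of_lform_self_neg {x : Fin (n + 1) → ℝ} (hx : lform n x x < 0) :
    spatialInner n x x < x (Fin.last n) ^ 2 := by
  rw [lform_eq_spatialInner_sub] at hx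
  linarith

lemma lform_neg_of_last_pos {x y : Fin (n + 1) → ℝ} (hx : lform n x x < 0)
    (hy : lform n y y ≤ 0) (hx₀ : 0 < x (Fin.last n)) (hy₀ : 0 < y (Fin.last n)) :
    lform n x y < 0 := by
  have hcs := sq_spatialInner_le_of_lform_self_nonpos x hy
  have hxx := spatialInner_self_lt_of_lform_self_neg hx
  have hlt : spatialInner n x y ^ 2 < (x (Fin.last n) * y (Fin.last n)) ^ 2 := by
    rw [mul_pow]
    exact hcs.trans_lt (mul_lt_mul_of_pos_right hxx (by positivity))
  rw [lform_eq_spatialInner_sub]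
  linarith [abs_lt_of_sq_lt_sq' hlt (by positivity)]

lemma last_pos_of_lform_neg {x y : Fin (n + 1) → ℝ} (hx : lform n x x < 0)
    (hy : lform n y y ≤ 0) (hx₀ : 0 < x (Fin.last n)) (hxy : lform n x y < 0) :
    0 < y (Fin.last n) := by
  by_contra! hy₀
  have hcs := sq_spatialInner_le_of_lform_self_nonpos x hy
  have hxx := spatialInner_self_lt_of_lform_self_neg hx
  have hle : spatialInner n x y ^ 2 ≤ (x (Fin.last n) * y (Fin.last n)) ^ 2 := by
    rw [mul_pow]
    exact hcs.trans (mul_le_mul_of_nonneg_right hxx.le (sq_nonneg _))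
  have hxy₀ : 0 ≤ -(x (Fin.last n) * y (Fin.last n)) := by nlinarith
  rw [← neg_sq (x (Fin.last n) * y (Fin.last n))] at hle
  have := (abs_le_of_sq_le_sq' hle hxy₀).1
  rw [lform_eq_spatialInner_sub] at hxy
  linarith

lemma lform_self_pos_of_last_eq_zero {v : Fin (n + 1) → ℝ} (hv : v ≠ 0)
    (hv₀ : v (Fin.last n) = 0) : 0 < lform n v v := by
  obtain ⟨i, hi⟩ : ∃ i : Fin n, v i.castSucc ≠ 0 := by
    by_contra! h
    exact hv (funext fun j => Fin.lastCases hv₀ h j)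
  rw [lform_eq_spatialInner_sub, hv₀, mul_zero, sub_zero]
  exact Finset.sum_pos' (fun j _ => mul_self_nonneg _)
    ⟨i, Finset.mem_univ i, mul_self_pos.2 hi⟩

lemma lform_self_pos_of_lform_eq_zero {q v : Fin (n + 1) → ℝ} (hq : lform n q q < 0)
    (hqv : lform n q v = 0) (hv : v ≠ 0) : 0 < lform n v v := by
  by_contra! hvv
  have hcs := sq_spatialInner_le_of_lform_self_nonpos q hvv
  have hqq := spatialInner_self_lt_of_lform_self_neg hq
  rw [lform_eq_spatialInner_sub, sub_eq_zero] at hqv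
  rw [hqv, mul_pow] at hcs
  have hv₀ : v (Fin.last n) = 0 := by
    by_contra hv₀
    have := mul_lt_mul_of_pos_right hqq (sq_pos_of_ne_zero hv₀)
    linarith
  exact hvv.not_gt (lform_self_pos_of_last_eq_zero hv hv₀)

end Lorentz

lemma tendsto_cosh_mul_exp_neg :
    Tendsto (fun s => Real.cosh s * Real.exp (-s)) atTop (𝓝 (1 / 2)) := by
  have h : ∀ s, Real.cosh s * Real.exp (-s) = (1 + Real.exp (-s) * Real.exp (-s)) / 2 := by
    intro s
    rw [Real.cosh_eq, div_mul_eq_mul_div, add_mul, ← Real.exp_add, add_neg_cancel,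
      Real.exp_zero]
  simp only [h]
  simpa using ((Real.tendsto_exp_neg_atTop_nhds_zero.mul
    Real.tendsto_exp_neg_atTop_nhds_zero).const_add 1).div_const 2

lemma tendsto_sinh_mul_exp_neg :
    Tendsto (fun s => Real.sinh s * Real.exp (-s)) atTop (𝓝 (1 / 2)) := by
  have h : ∀ s, Real.sinh s * Real.exp (-s) =
      Real.cosh s * Real.exp (-s) - Real.exp (-s) * Real.exp (-s) := by
    intro s
    rw [← sub_mul, ← Real.cosh_sub_sinh, sub_sub_cancel]
  simp only [h]
  simpa using tendsto_cosh_mul_exp_neg.sub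
    (Real.tendsto_exp_neg_atTop_nhds_zero.mul Real.tendsto_exp_neg_atTop_nhds_zero)

/-- `arcosh x = log (2x) + o(1)` as `x → ∞`. -/
lemma tendsto_arcosh_sub_of_tendsto_mul_exp_neg {α : Type*} {l : Filter α} {X g : α → ℝ}
    {L : ℝ} (hg : Tendsto g l atTop) (hX : Tendsto (fun t => X t * Real.exp (-g t)) l (𝓝 L))
    (hL : 0 < L) : Tendsto (fun t => arcosh (X t) - g t) l (𝓝 (Real.log (2 * L))) := by
  set E := fun t => Real.exp (-g t)
  have hE : Tendsto E l (𝓝 0) := Real.tendsto_exp_neg_atTop_nhds_zero.comp hg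
  have hG : Tendsto (fun t => X t * E t + Real.sqrt ((X t * E t) ^ 2 - E t ^ 2)) l
      (𝓝 (2 * L)) := by
    have := hX.add ((hX.pow 2).sub (hE.pow 2)).sqrt
    rwa [zero_pow two_ne_zero, sub_zero, Real.sqrt_sq hL.le, ← two_mul] at this
  refine ((Real.continuousAt_log (by positivity)).tendsto.comp hG).congr' ?_
  filter_upwards [hG.eventually (eventually_gt_nhds (by positivity))] with t ht
  have hfactor : X t * E t + Real.sqrt ((X t * E t) ^ 2 - E t ^ 2) =
      (X t + Real.sqrt (X t ^ 2 - 1)) * E t := by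
    rw [show (X t * E t) ^ 2 - E t ^ 2 = (X t ^ 2 - 1) * E t ^ 2 by ring,
      Real.sqrt_mul' _ (sq_nonneg _), Real.sqrt_sq (Real.exp_pos _).le]
    ring
  rw [Function.comp_apply, hfactor]
  rw [hfactor] at ht
  have hpos : 0 < X t + Real.sqrt (X t ^ 2 - 1) := pos_of_mul_pos_left ht (Real.exp_pos _).le
  rw [Real.log_mul hpos.ne' (Real.exp_pos _).ne', Real.log_exp, arcosh,
    ← sub_eq_add_neg]

/-- The null vector representing the endpoint at infinity of `t ↦ exp_q(tv)`: it is
`2κ · lim e^{-√κ‖v‖t} exp_q(tv)`. -/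
noncomputable def idealPoint (n : ℕ) (κ : ℝ) (q v : Fin (n + 1) → ℝ) : Fin (n + 1) → ℝ :=
  κ • q + (Real.sqrt κ / hnorm n v) • v

section Hyperbolic

variable {n : ℕ} {κ : ℝ}

lemma lform_self_neg_of_mem_Hyp (hκ : 0 < κ) {p : Fin (n + 1) → ℝ} (hp : p ∈ Hyp n κ) :
    lform n p p < 0 := by
  rw [hp.1, neg_lt_zero]
  positivity

lemma lform_idealPoint_self {q v : Fin (n + 1) → ℝ} (hκ : 0 < κ)
    (hq : lform n q q = -(1 / κ)) (hqv : lform n q v = 0) (hv : 0 < lform n v v) :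
    lform n (idealPoint n κ q v) (idealPoint n κ q v) = 0 := by
  have hnorm_sq : hnorm n v ^ 2 = lform n v v := Real.sq_sqrt hv.le
  have hnorm_pos : 0 < hnorm n v := Real.sqrt_pos.2 hv
  rw [idealPoint, lform_smul_add_smul, lform_comm _ q, lform_comm _ v, lform_smul_add_smul,
    lform_smul_add_smul, hq, hqv, lform_comm v q, hqv, ← hnorm_sq]
  field_simp
  linear_combination hnorm n v * Real.mul_self_sqrt hκ.le

lemma lform_idealPoint_neg {p q v : Fin (n + 1) → ℝ} (hκ : 0 < κ) (hp : p ∈ Hyp n κ)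
    (hq : q ∈ Hyp n κ) (hqv : lform n q v = 0) (hv : 0 < lform n v v) :
    lform n p (idealPoint n κ q v) < 0 := by
  have hnull := lform_idealPoint_self hκ hq.1 hqv hv
  have hqw : lform n q (idealPoint n κ q v) < 0 := by
    rw [idealPoint, lform_smul_add_smul, hq.1, hqv, mul_zero, add_zero, mul_neg, mul_one_div,
      div_self hκ.ne', neg_lt_zero]
    exact one_pos
  have hw₀ := last_pos_of_lform_neg (lform_self_neg_of_mem_Hyp hκ hq) hnull.le hq.2 hqw
  exact lform_neg_of_last_pos (lform_self_neg_of_mem_Hyp hκ hp) hnull.le hp.2 hw₀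

lemma tendsto_lform_hexp_mul_exp_neg (hκ : 0 < κ) (x : Fin (n + 1) → ℝ)
    {q v : Fin (n + 1) → ℝ} (hv : 0 < hnorm n v) :
    Tendsto (fun t => lform n x (hexp n κ q v t) * Real.exp (-(Real.sqrt κ * hnorm n v * t)))
      atTop (𝓝 (lform n x (idealPoint n κ q v) / (2 * κ))) := by
  have hs : 0 < Real.sqrt κ := Real.sqrt_pos.2 hκ
  have hω : Tendsto (fun t => Real.sqrt κ * hnorm n v * t) atTop atTop :=
    tendsto_id.const_mul_atTop (mul_pos hs hv)
  have hlim := ((tendsto_cosh_mul_exp_neg.comp hω).const_mul (lform n x q)).add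
    ((tendsto_sinh_mul_exp_neg.comp hω).const_mul (lform n x v / (Real.sqrt κ * hnorm n v)))
  convert hlim using 1
  · ext t
    rw [hexp, lform_smul_add_smul, show Real.sqrt κ * t * hnorm n v =
      Real.sqrt κ * hnorm n v * t by ring]
    simp only [Function.comp_apply]
    ring
  · rw [idealPoint, lform_smul_add_smul]
    congr 1
    field_simp
    linear_combination lform n x v * Real.mul_self_sqrt hκ.le

end Hyperbolic

theorem busemann_limit_hyperbolic_general (n : ℕ) (κ : ℝ) (hκ : 0 < κ)
    (p q v : Fin (n + 1) → ℝ) (hp : p ∈ Hyp n κ) (hq : q ∈ Hyp n κ)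
    (hqv : lform n q v = 0) (hv : v ≠ 0) :
    0 < -(lform n p (κ • q + (Real.sqrt κ / hnorm n v) • v)) ∧
      Tendsto (fun t : ℝ => hdist n κ p (hexp n κ q v t) - hnorm n v * t) atTop
        (𝓝 ((1 / Real.sqrt κ) *
          Real.log (-(lform n p (κ • q + (Real.sqrt κ / hnorm n v) • v))))) := by
  change 0 < -lform n p (idealPoint n κ q v) ∧ Tendsto _ atTop
    (𝓝 ((1 / Real.sqrt κ) * Real.log (-lform n p (idealPoint n κ q v))))
  have hvv := lform_self_pos_of_lform_eq_zero (lform_self_neg_of_mem_Hyp hκ hq) hqv hv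
  have hc := neg_pos.2 (lform_idealPoint_neg hκ hp hq hqv hvv)
  refine ⟨hc, ?_⟩
  have hs : 0 < Real.sqrt κ := Real.sqrt_pos.2 hκ
  have hω : Tendsto (fun t => Real.sqrt κ * hnorm n v * t) atTop atTop :=
    tendsto_id.const_mul_atTop (mul_pos hs (Real.sqrt_pos.2 hvv))
  have hX : Tendsto (fun t => -(κ * lform n p (hexp n κ q v t)) *
      Real.exp (-(Real.sqrt κ * hnorm n v * t))) atTop
      (𝓝 (-lform n p (idealPoint n κ q v) / 2)) := by
    convert (tendsto_lform_hexp_mul_exp_neg hκ p (q := q) (Real.sqrt_pos.2 hvv)).const_mul (-κ)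
      using 1
    · ext t
      ring
    · field_simp
  have hlim :=
    (tendsto_arcosh_sub_of_tendsto_mul_exp_neg hω hX (half_pos hc)).const_mul (1 / Real.sqrt κ)
  convert hlim using 2
  · rw [hdist, mul_sub]
    field_simp
  · rw [mul_div_cancel₀ _ two_ne_zero]

/-- For `p, q ∈ H^n_κ` and a nonzero tangent vector `v` at `q`,
the quantity `−⟨p, κq + (√κ/‖v‖)v⟩_L` is positive, and the Busemann limit is
`lim_{t→+∞} (d_κ(p, exp_q(tv)) − ‖v‖t) = (1/√κ)·ln(−⟨p, κq + (√κ/‖v‖)v⟩_L)`. -/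
theorem busemann_limit_hyperbolic (n : ℕ) (hn : 1 ≤ n) (κ : ℝ) (hκ : 0 < κ)
    (p q v : Fin (n + 1) → ℝ) (hp : p ∈ Hyp n κ) (hq : q ∈ Hyp n κ)
    (hqv : lform n q v = 0) (hv : v ≠ 0) :
    0 < -(lform n p (κ • q + (Real.sqrt κ / hnorm n v) • v)) ∧
      Tendsto (fun t : ℝ => hdist n κ p (hexp n κ q v t) - hnorm n v * t) atTop
        (𝓝 ((1 / Real.sqrt κ) *
          Real.log (-(lform n p (κ • q + (Real.sqrt κ / hnorm n v) • v))))) :=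
  busemann_limit_hyperbolic_general n κ hκ p q v hp hq hqv hv
end

section
/- Let p, q ∈ H^n_κ with p ≠ q and let v be a nonzero tangent vector at q. Set Proj_q p := p + κ⟨q,p⟩_L·q and log_q p := d_κ(q,p)·Proj_q p/√⟨Proj_q p, Proj_q p⟩_L. Then ⟨Proj_q p, Proj_q p⟩_L > 0, the quantity −⟨p, κq + (√κ/‖v‖)v⟩_L is strictly positive, and the Busemann support inequality holds: −⟨v, log_q p⟩_L ≤ ‖v‖·(1/√κ)·ln(−⟨p, κq + (√κ/‖v‖)v⟩_L). -/
open Filter Topology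

/-- Lorentzian projection onto the tangent space at `q`:
`Proj_q p := p + κ⟨q,p⟩_L · q`. -/
noncomputable def hproj (n : ℕ) (κ : ℝ) (q p : Fin (n + 1) → ℝ) : Fin (n + 1) → ℝ :=
  p + (κ * lform n q p) • q

/-- Inverse exponential map on `H^n_κ`:
`log_q p := d_κ(q,p) · Proj_q p / √⟨Proj_q p, Proj_q p⟩_L`. -/
noncomputable def hlog (n : ℕ) (κ : ℝ) (q p : Fin (n + 1) → ℝ) : Fin (n + 1) → ℝ :=
  (hdist n κ q p / Real.sqrt (lform n (hproj n κ q p) (hproj n κ q p))) • hproj n κ q p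

lemma lform_symm (n : ℕ) (x y : Fin (n+1) → ℝ) : lform n x y = lform n y x := by
  simp [lform, mul_comm]

lemma lform_add_left (n : ℕ) (x y z : Fin (n+1) → ℝ) :
    lform n (x + y) z = lform n x z + lform n y z := by
  simp [lform, add_mul, Finset.sum_add_distrib]; ring

lemma lform_smul_left (n : ℕ) (c : ℝ) (x z : Fin (n+1) → ℝ) :
    lform n (c • x) z = c * lform n x z := by
  simp [lform, Finset.mul_sum, mul_assoc, mul_sub]

lemma lform_add_right (n : ℕ) (x y z : Fin (n+1) → ℝ) :
    lform n z (x + y) = lform n z x + lform n z y := by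
  rw [lform_symm, lform_add_left, lform_symm n x z, lform_symm n y z]

lemma lform_smul_right (n : ℕ) (c : ℝ) (x z : Fin (n+1) → ℝ) :
    lform n z (c • x) = c * lform n z x := by
  rw [lform_symm, lform_smul_left, lform_symm]

/-- Tangent vectors at `q ∈ Hyp` are spacelike (nonneg, and positive if nonzero). -/
lemma tangent_pos (n : ℕ) (κ : ℝ) (hκ : 0 < κ) (q w : Fin (n+1) → ℝ)
    (hq : q ∈ Hyp n κ) (hqw : lform n q w = 0) :
    0 ≤ lform n w w ∧ (w ≠ 0 → 0 < lform n w w) := by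
  obtain ⟨hqq, hqt⟩ := hq
  set a := ∑ i : Fin n, q i.castSucc * q i.castSucc with ha
  set m := ∑ i : Fin n, q i.castSucc * w i.castSucc with hm
  set W := ∑ i : Fin n, w i.castSucc * w i.castSucc with hW
  set qt := q (Fin.last n) with hqtd
  set wt := w (Fin.last n) with hwtd
  have h1 : a - qt * qt = -(1/κ) := hqq
  have h2 : m - qt * wt = 0 := hqw
  have hWnn : 0 ≤ W := Finset.sum_nonneg fun i _ => mul_self_nonneg _
  have hann : 0 ≤ a := Finset.sum_nonneg fun i _ => mul_self_nonneg _
  have hcs : m ^ 2 ≤ a * W := by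
    have := Finset.sum_mul_sq_le_sq_mul_sq Finset.univ
      (fun i : Fin n => q i.castSucc) (fun i : Fin n => w i.castSucc)
    simpa [ha, hm, hW, sq] using this
  have hm2 : m = qt * wt := by linarith
  have h3 : qt * qt = a + 1/κ := by linarith
  have hq2 : 0 < qt * qt := mul_pos hqt hqt
  have hκ' : 0 < 1/κ := one_div_pos.2 hκ
  have key : 0 ≤ lform n w w := by
    have hl : lform n w w = W - wt * wt := rfl
    rw [hl]
    rw [hm2] at hcs
    nlinarith [sq_nonneg wt, mul_nonneg hWnn hκ'.le]
  refine ⟨key, fun hw => ?_⟩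
  rcases eq_or_lt_of_le key with heq | h
  · exfalso
    apply hw
    have hWz : W = 0 := by
      have hl : lform n w w = W - wt * wt := rfl
      have hWwt : W = wt * wt := by linarith [heq, hl]
      rw [hm2] at hcs
      have hWle : W ≤ 0 := by nlinarith [hcs, hWwt]
      exact le_antisymm hWle hWnn
    have hcomp : ∀ i : Fin n, w i.castSucc = 0 := by
      intro i
      have h0 := (Finset.sum_eq_zero_iff_of_nonneg
        (fun j (_ : j ∈ Finset.univ) => mul_self_nonneg (w j.castSucc))).1 hWz i (Finset.mem_univ i)
      exact mul_self_eq_zero.1 h0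
    have hmz : m = 0 := by
      rw [hm]; exact Finset.sum_eq_zero fun i _ => by rw [hcomp i, mul_zero]
    have hwtz : wt = 0 := by
      have : qt * wt = 0 := by linarith
      rcases mul_eq_zero.1 this with h | h
      · exact absurd h (ne_of_gt hqt)
      · exact h
    funext j
    induction j using Fin.lastCases with
    | last => exact hwtz
    | cast i => exact hcomp i
  · exact h

/-- Cauchy–Schwarz on the tangent space at `q`. -/
lemma tangent_cs (n : ℕ) (κ : ℝ) (hκ : 0 < κ) (q u v : Fin (n+1) → ℝ)
    (hq : q ∈ Hyp n κ) (hqu : lform n q u = 0) (hqv : lform n q v = 0)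
    (hvv : 0 < lform n v v) :
    (lform n u v) ^ 2 ≤ lform n u u * lform n v v := by
  set V := lform n v v with hV
  set M := lform n u v with hM
  have hqw : lform n q (V • u + (-M) • v) = 0 := by
    rw [lform_add_right, lform_smul_right, lform_smul_right, hqu, hqv]; ring
  have hww := (tangent_pos n κ hκ q (V • u + (-M) • v) hq hqw).1
  have hexp : lform n (V • u + (-M) • v) (V • u + (-M) • v) =
      V ^ 2 * lform n u u - 2 * V * M * M + M ^ 2 * V := by
    simp only [lform_add_left, lform_add_right, lform_smul_left, lform_smul_right]
    rw [lform_symm n v u, ← hM, ← hV]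
    ring
  rw [hexp] at hww
  nlinarith [hww, hvv]

/-- Reverse Cauchy–Schwarz: distinct points on the hyperboloid have `-κ⟨p,q⟩ > 1`. -/
lemma rev_cs (n : ℕ) (κ : ℝ) (hκ : 0 < κ) (p q : Fin (n+1) → ℝ)
    (hp : p ∈ Hyp n κ) (hq : q ∈ Hyp n κ) (hpq : p ≠ q) :
    1 < -(κ * lform n p q) := by
  obtain ⟨hpp, hpt⟩ := hp
  obtain ⟨hqq, hqt⟩ := hq
  set a := ∑ i : Fin n, p i.castSucc * p i.castSucc with ha
  set b := ∑ i : Fin n, q i.castSucc * q i.castSucc with hb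
  set m := ∑ i : Fin n, p i.castSucc * q i.castSucc with hm
  set pt := p (Fin.last n) with hptd
  set qt := q (Fin.last n) with hqtd
  have h1 : a - pt * pt = -(1/κ) := hpp
  have h2 : b - qt * qt = -(1/κ) := hqq
  have hgoal : lform n p q = m - pt * qt := rfl
  have hann : 0 ≤ a := Finset.sum_nonneg fun i _ => mul_self_nonneg _
  have hbnn : 0 ≤ b := Finset.sum_nonneg fun i _ => mul_self_nonneg _
  have hcs : m ^ 2 ≤ a * b := by
    have := Finset.sum_mul_sq_le_sq_mul_sq Finset.univ
      (fun i : Fin n => p i.castSucc) (fun i : Fin n => q i.castSucc)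
    simpa [ha, hb, hm, sq] using this
  have hDeq : a + b - 2 * m = ∑ i : Fin n, (p i.castSucc - q i.castSucc) ^ 2 := by
    rw [ha, hb, hm, ← Finset.sum_add_distrib, Finset.mul_sum, ← Finset.sum_sub_distrib]
    exact Finset.sum_congr rfl fun i _ => by ring
  have hD : 0 < a + b - 2 * m := by
    rcases eq_or_lt_of_le (Finset.sum_nonneg fun (i : Fin n) (_ : i ∈ Finset.univ) =>
      sq_nonneg (p i.castSucc - q i.castSucc)) with heq | h
    · exfalso
      apply hpq
      have hcomp : ∀ i : Fin n, p i.castSucc = q i.castSucc := by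
        intro i
        have h0 := (Finset.sum_eq_zero_iff_of_nonneg
          (fun j (_ : j ∈ Finset.univ) => sq_nonneg (p j.castSucc - q j.castSucc))).1 heq.symm
          i (Finset.mem_univ i)
        have := sq_eq_zero_iff.1 h0
        linarith
      have hab : a = b := by
        rw [ha, hb]; exact Finset.sum_congr rfl fun i _ => by rw [hcomp i]
      have hpq2 : pt * pt = qt * qt := by linarith
      have hptqt : pt = qt := by nlinarith
      funext j
      induction j using Fin.lastCases with
      | last => exact hptqt
      | cast i => exact hcomp i
    · rw [hDeq]; exact h
  -- goal: 1 < κ * (pt * qt - m)  i.e.  1 + κ m < κ pt qt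
  rw [hgoal]
  have hpt2 : pt * pt = a + 1/κ := by linarith
  have hqt2 : qt * qt = b + 1/κ := by linarith
  have hsq : (1 + κ * m) ^ 2 < (κ * (pt * qt)) ^ 2 := by
    have : (κ * (pt * qt)) ^ 2 = (κ * a + 1) * (κ * b + 1) := by
      have : (κ * (pt * qt)) ^ 2 = κ ^ 2 * ((pt * pt) * (qt * qt)) := by ring
      rw [this, hpt2, hqt2]
      field_simp
    rw [this]
    nlinarith [mul_pos hκ hκ, mul_pos (mul_pos hκ hκ) hD, hcs]
  rcases le_or_gt (1 + κ * m) 0 with hneg | hposm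
  · have : 0 < κ * (pt * qt) := mul_pos hκ (mul_pos hpt hqt)
    nlinarith
  · have hlt : 1 + κ * m < κ * (pt * qt) :=
      lt_of_pow_lt_pow_left₀ 2 (le_of_lt (mul_pos hκ (mul_pos hpt hqt))) hsq
    nlinarith

/-- Key scalar inequality via concavity of `log`. -/
lemma key_scalar (c s b : ℝ) (hc : 1 < c) (hs : 0 < s) (hs2 : s ^ 2 = c ^ 2 - 1)
    (hb : b ^ 2 ≤ s ^ 2) :
    (b / s) * Real.log (c + s) ≤ Real.log (c + b) := by
  have hbub : b ≤ s := by nlinarith [sq_nonneg (b - s)]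
  have hblb : -s ≤ b := by nlinarith [sq_nonneg (b + s)]
  have hcgs : s < c := by nlinarith
  have hcsp : 0 < c + s := by linarith
  have hcsm : 0 < c - s := by linarith
  have hμ : (0:ℝ) ≤ (s + b) / (2 * s) := by
    apply div_nonneg (by linarith) (by linarith)
  have hν : (0:ℝ) ≤ (s - b) / (2 * s) := by
    apply div_nonneg (by linarith) (by linarith)
  have hsum : (s + b) / (2 * s) + (s - b) / (2 * s) = 1 := by
    field_simp
    ring
  have hconc := strictConcaveOn_log_Ioi.concaveOn.2
    (Set.mem_Ioi.2 hcsp) (Set.mem_Ioi.2 hcsm) hμ hν hsum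
  simp only [smul_eq_mul] at hconc
  have harg : (s + b) / (2 * s) * (c + s) + (s - b) / (2 * s) * (c - s) = c + b := by
    field_simp; ring
  have hinv : c - s = (c + s)⁻¹ := by
    refine eq_inv_of_mul_eq_one_left ?_
    nlinarith
  have hlogm : Real.log (c - s) = -Real.log (c + s) := by
    rw [hinv, Real.log_inv]
  rw [harg, hlogm] at hconc
  have hlin : (s + b) / (2 * s) * Real.log (c + s) +
      (s - b) / (2 * s) * -Real.log (c + s) = (b / s) * Real.log (c + s) := by
    field_simp; ring
  linarith [hlin ▸ hconc]

/-- For `p, q ∈ H^n_κ` with `p ≠ q` and a nonzero tangent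
vector `v` at `q`: the projection `Proj_q p` is spacelike, the argument
`−⟨p, κq + (√κ/‖v‖)v⟩_L` of the logarithm is positive, and the Busemann support
inequality `−⟨v, log_q p⟩_L ≤ ‖v‖·(1/√κ)·ln(−⟨p, κq + (√κ/‖v‖)v⟩_L)` holds. -/
theorem busemann_support_inequality_hyperbolic (n : ℕ) (hn : 1 ≤ n) (κ : ℝ) (hκ : 0 < κ)
    (p q v : Fin (n + 1) → ℝ) (hp : p ∈ Hyp n κ) (hq : q ∈ Hyp n κ) (hpq : p ≠ q)
    (hqv : lform n q v = 0) (hv : v ≠ 0) :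
    0 < lform n (hproj n κ q p) (hproj n κ q p) ∧
      0 < -(lform n p (κ • q + (Real.sqrt κ / hnorm n v) • v)) ∧
      -(lform n v (hlog n κ q p)) ≤
        hnorm n v * ((1 / Real.sqrt κ) *
          Real.log (-(lform n p (κ • q + (Real.sqrt κ / hnorm n v) • v)))) := by
  have hκne : κ ≠ 0 := ne_of_gt hκ
  have hsκ : 0 < Real.sqrt κ := Real.sqrt_pos.2 hκ
  have hsκne : Real.sqrt κ ≠ 0 := ne_of_gt hsκ
  have hsκ2 : (Real.sqrt κ) ^ 2 = κ := Real.sq_sqrt hκ.le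
  have hc : 1 < -(κ * lform n p q) := rev_cs n κ hκ p q hp hq hpq
  set c := -(κ * lform n p q) with hcdef
  have hqp : lform n q p = lform n p q := lform_symm n q p
  -- the projection is tangent at q
  have hprojtan : lform n q (hproj n κ q p) = 0 := by
    rw [hproj, lform_add_right, lform_smul_right, hq.1, hqp]
    field_simp
    ring
  -- ⟨Proj, Proj⟩ = (c² - 1)/κ
  have hPP : lform n (hproj n κ q p) (hproj n κ q p) = (c ^ 2 - 1) / κ := by
    rw [hproj]
    simp only [lform_add_left, lform_add_right, lform_smul_left, lform_smul_right]
    rw [hp.1, hq.1, hqp, hcdef]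
    field_simp
    ring
  have hc21 : (0:ℝ) < c ^ 2 - 1 := by nlinarith
  have part1 : 0 < lform n (hproj n κ q p) (hproj n κ q p) := by
    rw [hPP]; exact div_pos hc21 hκ
  -- v is spacelike
  have hvv : 0 < lform n v v := (tangent_pos n κ hκ q v hq hqv).2 hv
  have hnv2 : (hnorm n v) ^ 2 = lform n v v := Real.sq_sqrt hvv.le
  have hnvpos : 0 < hnorm n v := Real.sqrt_pos.2 hvv
  have hnvne : hnorm n v ≠ 0 := ne_of_gt hnvpos
  -- s and b
  set s := Real.sqrt (c ^ 2 - 1) with hsdef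
  have hspos : 0 < s := Real.sqrt_pos.2 hc21
  have hsne : s ≠ 0 := ne_of_gt hspos
  have hs2 : s ^ 2 = c ^ 2 - 1 := Real.sq_sqrt hc21.le
  set b := -(Real.sqrt κ / hnorm n v * lform n p v) with hbdef
  -- the Busemann argument equals c + b
  have harg : -(lform n p (κ • q + (Real.sqrt κ / hnorm n v) • v)) = c + b := by
    rw [lform_add_right, lform_smul_right, lform_smul_right, hcdef, hbdef]
    ring
  -- ⟨p, v⟩ = ⟨Proj, v⟩
  have hpv : lform n (hproj n κ q p) v = lform n p v := by
    rw [hproj, lform_add_left, lform_smul_left, hqv]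
    ring
  -- b² ≤ s²
  have hb2 : b ^ 2 ≤ s ^ 2 := by
    have hcs2 := tangent_cs n κ hκ q (hproj n κ q p) v hq hprojtan hqv hvv
    rw [hPP, hpv] at hcs2
    have hbsq : b ^ 2 = (Real.sqrt κ) ^ 2 / (hnorm n v) ^ 2 * (lform n p v) ^ 2 := by
      rw [hbdef]; ring
    rw [hsκ2, hnv2] at hbsq
    rw [hbsq, hs2, div_mul_eq_mul_div, div_le_iff₀ hvv]
    calc κ * (lform n p v) ^ 2 ≤ κ * ((c ^ 2 - 1) / κ * lform n v v) := by
          exact mul_le_mul_of_nonneg_left hcs2 hκ.le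
      _ = (c ^ 2 - 1) * lform n v v := by field_simp
  -- part 2
  have hcgs : s < c := by nlinarith
  have hblb : -s ≤ b := by nlinarith [sq_nonneg (b + s)]
  have part2 : 0 < c + b := by linarith
  refine ⟨part1, by rw [harg]; exact part2, ?_⟩
  -- part 3
  have hkey := key_scalar c s b hc hspos hs2 hb2
  have hsqrtPP : Real.sqrt (lform n (hproj n κ q p) (hproj n κ q p)) =
      s / Real.sqrt κ := by
    rw [hPP, Real.sqrt_div hc21.le]
  have hd : hdist n κ q p = (1 / Real.sqrt κ) * Real.log (c + s) := by
    rw [hdist, hqp, ← hcdef, arcosh, ← hsdef]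
  have hvproj : lform n v (hproj n κ q p) = lform n p v := by
    rw [lform_symm]; exact hpv
  have hLpv : lform n p v = -(b * hnorm n v / Real.sqrt κ) := by
    rw [hbdef]; field_simp
  have hLHS : -(lform n v (hlog n κ q p)) =
      hnorm n v * ((1 / Real.sqrt κ) * ((b / s) * Real.log (c + s))) := by
    rw [hlog, lform_smul_right, hvproj, hd, hsqrtPP, hLpv]
    field_simp
  rw [hLHS, harg]
  have h0 : (0:ℝ) ≤ hnorm n v * (1 / Real.sqrt κ) := by positivity
  calc hnorm n v * ((1 / Real.sqrt κ) * ((b / s) * Real.log (c + s)))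
      = hnorm n v * (1 / Real.sqrt κ) * ((b / s) * Real.log (c + s)) := by ring
    _ ≤ hnorm n v * (1 / Real.sqrt κ) * Real.log (c + b) :=
        mul_le_mul_of_nonneg_left hkey h0
    _ = hnorm n v * ((1 / Real.sqrt κ) * Real.log (c + b)) := by ring
end

section
/- Let E be a real inner product space, let σ > 0, and let g, h : E → ℝ with h σ-strongly convex. Let x ∈ E, let s be a subgradient of h at x, and let y ∈ E be a global minimizer of p ↦ g(p) − ⟨s, p⟩. Then the difference-of-convex objective φ := g − h satisfies φ(y) ≤ φ(x) − (σ/2)‖x − y‖². -/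
open RealInnerProductSpace

/-- `f` is σ-strongly convex on a real inner product space `E`:
`f((1−t)x + ty) ≤ (1−t)f(x) + tf(y) − (σ/2)t(1−t)‖x−y‖²` for all `x, y` and
`t ∈ [0,1]`. -/
def StronglyConvexWith {E : Type*} [NormedAddCommGroup E] [InnerProductSpace ℝ E]
    (σ : ℝ) (f : E → ℝ) : Prop :=
  ∀ x y : E, ∀ t : ℝ, 0 ≤ t → t ≤ 1 →
    f ((1 - t) • x + t • y) ≤
      (1 - t) * f x + t * f y - σ / 2 * (t * (1 - t) * ‖x - y‖ ^ 2)

/-- (One-step sufficient descent of the DC algorithm, flat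
case.) If `h` is σ-strongly convex, `s` is a subgradient of `h` at `x`, and
`y` globally minimizes `p ↦ g(p) − ⟪s, p⟫`, then `φ := g − h` satisfies
`φ(y) ≤ φ(x) − (σ/2)‖x − y‖²`. -/
theorem dca_sufficient_descent {E : Type*}
    [NormedAddCommGroup E] [InnerProductSpace ℝ E]
    (σ : ℝ) (hσ : 0 < σ) (g h : E → ℝ) (hh : StronglyConvexWith σ h)
    (x s : E) (hs : ∀ p : E, h x + ⟪s, p - x⟫ ≤ h p)
    (y : E) (hy : ∀ p : E, g y - ⟪s, y⟫ ≤ g p - ⟪s, p⟫) :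
    g y - h y ≤ (g x - h x) - σ / 2 * ‖x - y‖ ^ 2 := by
  -- Strengthened subgradient inequality from strong convexity
  have key : ∀ p : E, h x + ⟪s, p - x⟫ + σ / 2 * ‖x - p‖ ^ 2 ≤ h p := by
    intro p
    have hstep : ∀ t : ℝ, t ∈ Set.Ioc (0:ℝ) 1 →
        σ / 2 * ((1 - t) * ‖x - p‖ ^ 2) ≤ h p - h x - ⟪s, p - x⟫ := by
      intro t ht
      have h1 := hh x p t ht.1.le ht.2
      have h2 := hs ((1 - t) • x + t • p)
      have heq : (1 - t) • x + t • p - x = t • (p - x) := by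
        rw [smul_sub]; module
      rw [heq, real_inner_smul_right] at h2
      have h3 : h x + t * ⟪s, p - x⟫ ≤
          (1 - t) * h x + t * h p - σ / 2 * (t * (1 - t) * ‖x - p‖ ^ 2) :=
        h2.trans h1
      have h4 : t * (σ / 2 * ((1 - t) * ‖x - p‖ ^ 2)) ≤
          t * (h p - h x - ⟪s, p - x⟫) := by nlinarith
      exact le_of_mul_le_mul_left h4 ht.1
    have hlim : Filter.Tendsto (fun t : ℝ => σ / 2 * ((1 - t) * ‖x - p‖ ^ 2))
        (nhdsWithin 0 (Set.Ioi 0)) (nhds (σ / 2 * ((1 - 0) * ‖x - p‖ ^ 2))) := by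
      exact ((continuous_const.mul ((continuous_const.sub continuous_id).mul
        continuous_const)).tendsto 0).mono_left nhdsWithin_le_nhds
    have := le_of_tendsto hlim
      (Filter.eventually_of_mem (Ioc_mem_nhdsGT_of_mem (by norm_num : (0:ℝ) ∈ Set.Ico 0 1)) hstep)
    simp only [sub_zero, one_mul] at this
    linarith
  have h5 := key y
  have h6 := hy x
  have hinner : ⟪s, x - y⟫ = -⟪s, y - x⟫ := by
    rw [← inner_neg_right]; congr 1; abel
  have hin2 : ⟪s, x⟫ - ⟪s, y⟫ = ⟪s, x - y⟫ := by
    rw [inner_sub_right]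
  nlinarith [hinner, hin2]
end

section
/- Let (X,d) be a metric space, let σ > 0 and c ∈ ℝ, let φ : X → ℝ, and let (p_k)_{k∈ℕ} be a sequence in X such that φ(p_k) ≥ c for all k and φ(p_{k+1}) ≤ φ(p_k) − (σ/2)·d(p_k, p_{k+1})² for all k. Then for every N ∈ ℕ there exists k with 0 ≤ k ≤ N such that d(p_k, p_{k+1}) ≤ √(2(φ(p_0) − c)/(σ(N+1))). -/
/-- (Iteration complexity of the criticality measure.)
If a sequence `(p_k)` in a metric space satisfies
`φ(p_{k+1}) ≤ φ(p_k) − (σ/2)d(p_k,p_{k+1})²` (σ > 0) and `φ(p_k) ≥ c` for all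
`k`, then for every `N` there exists `k ≤ N` with
`d(p_k, p_{k+1}) ≤ √(2(φ(p_0) − c)/(σ(N+1)))`. -/
theorem descent_iteration_complexity {X : Type*} [MetricSpace X]
    (σ c : ℝ) (hσ : 0 < σ) (φ : X → ℝ) (p : ℕ → X)
    (hlb : ∀ k : ℕ, c ≤ φ (p k))
    (hdesc : ∀ k : ℕ, φ (p (k + 1)) ≤ φ (p k) - σ / 2 * dist (p k) (p (k + 1)) ^ 2) :
    ∀ N : ℕ, ∃ k : ℕ, k ≤ N ∧
      dist (p k) (p (k + 1)) ≤ Real.sqrt (2 * (φ (p 0) - c) / (σ * (N + 1))) := by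
  intro N
  have hsum : ∀ n : ℕ,
      σ / 2 * ∑ k ∈ Finset.range n, dist (p k) (p (k + 1)) ^ 2 ≤ φ (p 0) - φ (p n) := by
    intro n
    induction n with
    | zero => simp
    | succ n ih =>
      rw [Finset.sum_range_succ, mul_add]
      have := hdesc n
      linarith
  by_contra h
  push_neg at h
  set S := 2 * (φ (p 0) - c) / (σ * (N + 1)) with hS
  have hS0 : 0 ≤ S := by
    apply div_nonneg
    · have := hlb 0; linarith
    · positivity
  have key : ∀ k ∈ Finset.range (N + 1), S < dist (p k) (p (k + 1)) ^ 2 := by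
    intro k hk
    have hk' : k ≤ N := Nat.lt_succ_iff.mp (Finset.mem_range.mp hk)
    have h1 := h k hk'
    have h2 : Real.sqrt S ^ 2 < dist (p k) (p (k + 1)) ^ 2 := by
      apply pow_lt_pow_left₀ h1 (Real.sqrt_nonneg S) (by norm_num)
    rwa [Real.sq_sqrt hS0] at h2
  have hsum2 : (N + 1 : ℝ) * S < ∑ k ∈ Finset.range (N + 1), dist (p k) (p (k + 1)) ^ 2 := by
    have := Finset.sum_lt_sum_of_nonempty (Finset.nonempty_range_add_one)
      (f := fun _ => S) key
    simpa [Finset.sum_const, mul_comm] using this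
  have hNS : (N + 1 : ℝ) * S = 2 * (φ (p 0) - c) / σ := by
    rw [hS]
    field_simp
  have h3 := hsum (N + 1)
  have h4 := hlb (N + 1)
  have hσ2 : (0:ℝ) < σ / 2 := by linarith
  have h5 : σ / 2 * ((N + 1 : ℝ) * S) < σ / 2 * ∑ k ∈ Finset.range (N + 1),
      dist (p k) (p (k + 1)) ^ 2 := by
    exact mul_lt_mul_of_pos_left hsum2 hσ2
  rw [hNS] at h5
  have h6 : σ / 2 * (2 * (φ (p 0) - c) / σ) = φ (p 0) - c := by
    field_simp
  rw [h6] at h5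
  linarith
end

section
/- Let E be a real inner product space, and let g, h : E → ℝ be convex and continuous. Let (p_k) and (s_k) be sequences in E such that for every k: s_k is a subgradient of h at p_k, and p_{k+1} is a global minimizer of q ↦ g(q) − ⟨s_k, q⟩. Assume p_k → p̄, s_k → s̄, and ‖p_k − p_{k+1}‖ → 0. Then s̄ is a subgradient of g at p̄ and s̄ is a subgradient of h at p̄; that is, p̄ is a critical point of the difference-of-convex problem minimize g − h, meaning ∂g(p̄) ∩ ∂h(p̄) ≠ ∅. -/
open Filter Topology RealInnerProductSpace

/-- (Cluster points of the DC algorithm are critical.)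
Let `g, h : E → ℝ` be convex and continuous, and let `(p_k)`, `(s_k)` satisfy:
`s_k` is a subgradient of `h` at `p_k`, and `p_{k+1}` globally minimizes
`q ↦ g(q) − ⟪s_k, q⟫`. If `p_k → p̄`, `s_k → s̄`, and `‖p_k − p_{k+1}‖ → 0`,
then `s̄` is a subgradient of `g` at `p̄` and of `h` at `p̄`; that is,
`∂g(p̄) ∩ ∂h(p̄) ≠ ∅` and `p̄` is a critical point of `min (g − h)`. -/
theorem dca_cluster_point_critical {E : Type*}
    [NormedAddCommGroup E] [InnerProductSpace ℝ E]
    (g h : E → ℝ) (hg : ConvexOn ℝ Set.univ g) (hgc : Continuous g)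
    (hh : ConvexOn ℝ Set.univ h) (hhc : Continuous h)
    (p s : ℕ → E) (pbar sbar : E)
    (hsub : ∀ k : ℕ, ∀ x : E, h (p k) + ⟪s k, x - p k⟫ ≤ h x)
    (hmin : ∀ k : ℕ, ∀ x : E, g (p (k + 1)) - ⟪s k, p (k + 1)⟫ ≤ g x - ⟪s k, x⟫)
    (hp : Tendsto p atTop (𝓝 pbar)) (hs : Tendsto s atTop (𝓝 sbar))
    (hd : Tendsto (fun k : ℕ => ‖p k - p (k + 1)‖) atTop (𝓝 0)) :
    (∀ x : E, g pbar + ⟪sbar, x - pbar⟫ ≤ g x) ∧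
      (∀ x : E, h pbar + ⟪sbar, x - pbar⟫ ≤ h x) := by
  have hp' : Tendsto (fun k => p (k + 1)) atTop (𝓝 pbar) :=
    hp.comp (tendsto_add_atTop_nat 1)
  constructor
  · intro x
    have hL : Tendsto (fun k => g (p (k + 1)) - ⟪s k, p (k + 1)⟫) atTop
        (𝓝 (g pbar - ⟪sbar, pbar⟫)) :=
      ((hgc.tendsto pbar).comp hp').sub (hs.inner hp')
    have hR : Tendsto (fun k => g x - ⟪s k, x⟫) atTop (𝓝 (g x - ⟪sbar, x⟫)) :=
      tendsto_const_nhds.sub (hs.inner tendsto_const_nhds)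
    have := le_of_tendsto_of_tendsto' hL hR (fun k => hmin k x)
    have h2 : ⟪sbar, x - pbar⟫ = ⟪sbar, x⟫ - ⟪sbar, pbar⟫ := inner_sub_right _ _ _
    linarith
  · intro x
    have hL : Tendsto (fun k => h (p k) + ⟪s k, x - p k⟫) atTop
        (𝓝 (h pbar + ⟪sbar, x - pbar⟫)) :=
      ((hhc.tendsto pbar).comp hp).add (hs.inner (tendsto_const_nhds.sub hp))
    exact le_of_tendsto hL (Filter.Eventually.of_forall fun k => hsub k x)
end
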